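/- Let u : ℝ[x,y] → ℝ be a reflexive linear moment functional, let Λ = (λ_{ij}) be a real symmetric centrosymmetric positive semidefinite matrix of size (n+1)×(n+1), and let p₀, …, pₙ ∈ ℝ² be points, p_i = (x_i, y_i), such that x_i = y_{n−i} for all i = 0, …, n (equivalently, p_{n−i} is obtained from p_i by swapping its coordinates). Define the Uvarov bilinear form (f, g)_U = u(f·g) + Σ_{i=0}^{n} Σ_{j=0}^{n} λ_{ij} f(p_i) g(p_j) for f, g ∈ ℝ[x,y]. Then (x^k, y^l)_U = (x^l, y^k)_U for all k, l ≥ 0. -/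

import Mathlib

/-!
Write `σ` for the swap of the two variables. For every `f`, `g` one has `(f, g)_U = (σ g, σ f)_U`:
`u (σ g * σ f) = u (σ (f * g)) = u (f * g)` by reflexivity, `σ` acts on the nodes as `pᵢ ↦ p_{n-i}`,
which centrosymmetry of `Λ` absorbs, and symmetry of `Λ` then exchanges the roles of `f` and `g`.
Taking `f = x^k`, `g = y^l` gives the theorem.
-/

open Matrix MvPolynomial

/-- A real matrix `Λ` is centrosymmetric if `λᵢⱼ = λ_{n-i, n-j}` for all `i`, `j`. -/
def Centrosymmetric {m n : ℕ} (L : Matrix (Fin m) (Fin n) ℝ) : Prop :=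
  ∀ i j, L i j = L i.rev j.rev

theorem map_rename_swap_eq {R M : Type*} [CommSemiring R] [AddCommMonoid M] [Module R M]
    (u : MvPolynomial (Fin 2) R →ₗ[R] M)
    (hu : ∀ a b : ℕ, u (X 0 ^ a * X 1 ^ b) = u (X 0 ^ b * X 1 ^ a))
    (f : MvPolynomial (Fin 2) R) : u (rename (Equiv.swap 0 1) f) = u f := by
  induction f using MvPolynomial.induction_on' with
  | monomial s r =>
    rw [monomial_fin_two, mul_assoc, ← smul_eq_C_mul, map_smul, map_mul, map_pow, map_pow,
      rename_X, rename_X, Equiv.swap_apply_left, Equiv.swap_apply_right, mul_comm, map_smul,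
      map_smul, hu]
  | add f g hf hg => rw [map_add, map_add, hf, hg, map_add]

theorem Centrosymmetric.sum_rev {m n : ℕ} {L : Matrix (Fin m) (Fin n) ℝ} (hL : Centrosymmetric L)
    (a : Fin m → ℝ) (b : Fin n → ℝ) :
    ∑ i, ∑ j, L i j * a i.rev * b j.rev = ∑ i, ∑ j, L i j * a i * b j := by
  rw [← Equiv.sum_comp Fin.revPerm]
  refine Finset.sum_congr rfl fun i _ => ?_
  rw [← Equiv.sum_comp Fin.revPerm]
  simp only [Fin.revPerm_apply, Fin.rev_rev, hL i]

theorem Matrix.IsSymm.sum_swap {ι R : Type*} [Fintype ι] [CommSemiring R] {L : Matrix ι ι R}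
    (hL : L.IsSymm) (a b : ι → R) :
    ∑ i, ∑ j, L i j * a i * b j = ∑ i, ∑ j, L i j * b i * a j := by
  rw [Finset.sum_comm]
  refine Finset.sum_congr rfl fun i _ => Finset.sum_congr rfl fun j _ => ?_
  rw [hL.apply i j]; ring

noncomputable def uvarovForm {m : ℕ} (u : MvPolynomial (Fin 2) ℝ →ₗ[ℝ] ℝ)
    (Λ : Matrix (Fin m) (Fin m) ℝ) (pt : Fin m → Fin 2 → ℝ) (f g : MvPolynomial (Fin 2) ℝ) : ℝ :=
  u (f * g) + ∑ i, ∑ j, Λ i j * eval (pt i) f * eval (pt j) g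

theorem comp_swap_eq_rev {m : ℕ} {pt : Fin m → Fin 2 → ℝ} (hpt : ∀ i, pt i 0 = pt i.rev 1)
    (i : Fin m) : pt i ∘ Equiv.swap 0 1 = pt i.rev := by
  funext c
  fin_cases c
  · simp [hpt i.rev]
  · simp [hpt i]

theorem uvarovForm_rename_swap {m : ℕ} {u : MvPolynomial (Fin 2) ℝ →ₗ[ℝ] ℝ}
    (hu : ∀ a b : ℕ, u (X 0 ^ a * X 1 ^ b) = u (X 0 ^ b * X 1 ^ a))
    {Λ : Matrix (Fin m) (Fin m) ℝ} (hΛsym : Λ.IsSymm) (hΛc : Centrosymmetric Λ)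
    {pt : Fin m → Fin 2 → ℝ} (hpt : ∀ i, pt i 0 = pt i.rev 1) (f g : MvPolynomial (Fin 2) ℝ) :
    uvarovForm u Λ pt (rename (Equiv.swap 0 1) g) (rename (Equiv.swap 0 1) f) =
      uvarovForm u Λ pt f g := by
  simp only [uvarovForm, ← map_mul, map_rename_swap_eq u hu, eval_rename, comp_swap_eq_rev hpt]
  rw [mul_comm, hΛc.sum_rev (fun i => eval (pt i) g) (fun j => eval (pt j) f),
    hΛsym.sum_swap]

theorem uvarov_modification_reflexive_general (n : ℕ)
    (u : MvPolynomial (Fin 2) ℝ →ₗ[ℝ] ℝ)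
    (hu : ∀ a b : ℕ, u (X 0 ^ a * X 1 ^ b) = u (X 0 ^ b * X 1 ^ a))
    (Λ : Matrix (Fin (n + 1)) (Fin (n + 1)) ℝ)
    (hΛsym : Λ.IsSymm) (hΛc : Centrosymmetric Λ)
    (pt : Fin (n + 1) → Fin 2 → ℝ)
    (hpt : ∀ i : Fin (n + 1), pt i 0 = pt i.rev 1) :
    ∀ k l : ℕ,
      u (X 0 ^ k * X 1 ^ l) +
          ∑ i, ∑ j, Λ i j * eval (pt i) (X 0 ^ k : MvPolynomial (Fin 2) ℝ) *
            eval (pt j) (X 1 ^ l : MvPolynomial (Fin 2) ℝ) =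
        u (X 0 ^ l * X 1 ^ k) +
          ∑ i, ∑ j, Λ i j * eval (pt i) (X 0 ^ l : MvPolynomial (Fin 2) ℝ) *
            eval (pt j) (X 1 ^ k : MvPolynomial (Fin 2) ℝ) := by
  intro k l
  have h := uvarovForm_rename_swap hu hΛsym hΛc hpt (X 0 ^ k) (X 1 ^ l)
  simp only [map_pow, rename_X, Equiv.swap_apply_left, Equiv.swap_apply_right] at h
  exact h.symm

/-- Let `u` be a reflexive moment functional on `ℝ[x,y]`, `Λ` a symmetric
centrosymmetric positive semidefinite matrix, and `p₀, …, pₙ ∈ ℝ²` points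
`pᵢ = (xᵢ, yᵢ)` with `xᵢ = y_{n-i}`.  Then the Uvarov bilinear form
`(f, g)_U = u(f g) + Σᵢⱼ λᵢⱼ f(pᵢ) g(pⱼ)` satisfies `(x^k, y^l)_U = (x^l, y^k)_U`
for all `k, l ≥ 0`. -/
theorem uvarov_modification_reflexive (n : ℕ)
    (u : MvPolynomial (Fin 2) ℝ →ₗ[ℝ] ℝ)
    (hu : ∀ a b : ℕ, u (X 0 ^ a * X 1 ^ b) = u (X 0 ^ b * X 1 ^ a))
    (Λ : Matrix (Fin (n + 1)) (Fin (n + 1)) ℝ)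
    (hΛsym : Λ.IsSymm) (hΛpsd : Λ.PosSemidef) (hΛc : Centrosymmetric Λ)
    (pt : Fin (n + 1) → Fin 2 → ℝ)
    (hpt : ∀ i : Fin (n + 1), pt i 0 = pt i.rev 1) :
    ∀ k l : ℕ,
      u (X 0 ^ k * X 1 ^ l) +
          ∑ i, ∑ j, Λ i j * eval (pt i) (X 0 ^ k : MvPolynomial (Fin 2) ℝ) *
            eval (pt j) (X 1 ^ l : MvPolynomial (Fin 2) ℝ) =
        u (X 0 ^ l * X 1 ^ k) +
          ∑ i, ∑ j, Λ i j * eval (pt i) (X 0 ^ l : MvPolynomial (Fin 2) ℝ) *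
            eval (pt j) (X 1 ^ k : MvPolynomial (Fin 2) ℝ) :=
  uvarov_modification_reflexive_general n u hu Λ hΛsym hΛc pt hpt
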